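/- Sampling probability asymptotics for a rare allele in a large sample with fixed selection (equation (8) of the paper): fix θ₁, θ₂ > 0, β ∈ ℝ and a natural number n₁. For each natural number n₂, set n = n₁ + n₂ and define q(n₁,n₂;β) := C(n,n₁) · I(n₁,n₂,β) / I(0,0,β), where C(n,n₁) is the binomial coefficient and I(m₁,m₂,β) := ∫₀¹ x^{θ₁+m₁-1}(1-x)^{θ₂+m₂-1} e^{βx} dx. Then lim_{n₂ → ∞} n₂^{θ₁} · q(n₁,n₂;β) = Γ(θ₁+n₁) / (n₁! · I(0,0,β)). -/

import Mathlib

/-!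
The binomial coefficient `C(n₁ + n, n₁)` grows like `n ^ n₁ / n₁!`, so with `a = θ₁ + n₁` it
suffices that `n ^ a ∫₀¹ x^(a-1) (1-x)^(θ₂+n-1) e^(βx) dx → Γ(a)`. Without the exponential the
integral is the Beta function `Γ(a) Γ(θ₂+n) / Γ(a+θ₂+n)`, and `n ^ a Γ(θ₂+n) / Γ(a+θ₂+n) → 1` by
Euler's limit formula for `Γ`. Since `|e^(βx) - 1| = O(x)` on `[0, 1]`, the exponential only adds
an error bounded by a multiple of `n ^ a B(a+1, θ₂+n) = O(1/n)`.
-/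

open Real Filter Topology MeasureTheory Set Asymptotics
open scoped Nat

lemma ofReal_rpow_mul_one_sub_rpow {p q x : ℝ} (hx : x ∈ Icc 0 1) :
    ((x ^ (p - 1) * (1 - x) ^ (q - 1) : ℝ) : ℂ)
      = (x : ℂ) ^ ((p : ℂ) - 1) * (1 - (x : ℂ)) ^ ((q : ℂ) - 1) := by
  push_cast [Complex.ofReal_cpow hx.1, Complex.ofReal_cpow (sub_nonneg.2 hx.2)]
  rfl

lemma intervalIntegrable_rpow_mul_one_sub_rpow {p q : ℝ} (hp : 0 < p) (hq : 0 < q) :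
    IntervalIntegrable (fun x : ℝ => x ^ (p - 1) * (1 - x) ^ (q - 1)) volume 0 1 := by
  refine (Complex.betaIntegral_convergent (u := p) (v := q) (by simpa) (by simpa)).norm.congr
    fun x hx => ?_
  rw [uIoc_of_le zero_le_one] at hx
  have hx' : x ∈ Icc (0 : ℝ) 1 := Ioc_subset_Icc_self hx
  rw [← ofReal_rpow_mul_one_sub_rpow hx', Complex.norm_real, Real.norm_of_nonneg
    (mul_nonneg (rpow_nonneg hx'.1 _) (rpow_nonneg (sub_nonneg.2 hx'.2) _))]

lemma integral_rpow_mul_one_sub_rpow {p q : ℝ} (hp : 0 < p) (hq : 0 < q) :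
    ∫ x in (0 : ℝ)..1, x ^ (p - 1) * (1 - x) ^ (q - 1) = Gamma p * Gamma q / Gamma (p + q) := by
  apply Complex.ofReal_injective
  rw [← intervalIntegral.integral_ofReal, intervalIntegral.integral_congr fun x hx =>
    ofReal_rpow_mul_one_sub_rpow (by rwa [uIcc_of_le zero_le_one] at hx)]
  rw [← Complex.betaIntegral, Complex.betaIntegral_eq_Gamma_mul_div _ _ (by simpa) (by simpa)]
  simp only [← Complex.ofReal_add, Complex.Gamma_ofReal]
  norm_cast

lemma Real.Gamma_add_nat_eq_mul_prod {s : ℝ} (hs : 0 < s) (n : ℕ) :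
    Gamma (s + n) = Gamma s * ∏ j ∈ Finset.range n, (s + j) := by
  induction n with
  | zero => simp
  | succ n ih =>
    rw [Nat.cast_succ, ← add_assoc, Gamma_add_one (by positivity), ih, Finset.prod_range_succ]
    ring

lemma Real.Gamma_add_nat_mul_GammaSeq {s : ℝ} (hs : 0 < s) (n : ℕ) :
    Gamma (s + n) * GammaSeq s n * (s + n) = Gamma s * n ^ s * n ! := by
  have hprod : ∏ j ∈ Finset.range n, (s + j) ≠ 0 :=
    Finset.prod_ne_zero_iff.2 fun j _ => by positivity
  rw [Gamma_add_nat_eq_mul_prod hs, GammaSeq, Finset.prod_range_succ]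
  field_simp

lemma tendsto_rpow_mul_Gamma_add_nat_div_Gamma_add_nat {a b : ℝ} (ha : 0 < a) (hb : 0 < b) :
    Tendsto (fun n : ℕ => (n : ℝ) ^ a * Gamma (b + n) / Gamma (a + b + n)) atTop (𝓝 1) := by
  have hab : 0 < a + b := add_pos ha hb
  have hlin : Tendsto (fun n : ℕ => (a + b + n) / (b + n)) atTop (𝓝 1) := by
    have h := (tendsto_const_nhds (x := a)).div_atTop
      (tendsto_atTop_add_const_left atTop b tendsto_natCast_atTop_atTop) |>.const_add 1
    rw [add_zero] at h
    refine h.congr fun n => ?_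
    have hbn : b + (n : ℝ) ≠ 0 := by positivity
    field_simp
    ring
  have hlim := ((GammaSeq_tendsto_Gamma (a + b)).div (GammaSeq_tendsto_Gamma b)
    (Gamma_pos_of_pos hb).ne').const_mul (Gamma b / Gamma (a + b)) |>.mul hlin
  rw [div_mul_div_cancel₀ (Gamma_pos_of_pos hab).ne', div_self (Gamma_pos_of_pos hb).ne',
    one_mul] at hlim
  refine hlim.congr' ?_
  filter_upwards [eventually_ge_atTop 1] with n hn
  have hn0 : (0 : ℝ) < n := by exact_mod_cast hn
  have hb' := Gamma_add_nat_mul_GammaSeq hb n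
  have hab' := Gamma_add_nat_mul_GammaSeq hab n
  have hSb : GammaSeq b n ≠ 0 := by
    intro h
    rw [h, mul_zero, zero_mul] at hb'
    exact (mul_pos (mul_pos (Gamma_pos_of_pos hb) (rpow_pos_of_pos hn0 b))
      (by positivity)).ne' hb'.symm
  have hGab : Gamma (a + b + n) ≠ 0 := (Gamma_pos_of_pos (by positivity)).ne'
  rw [rpow_add hn0] at hab'
  simp only [Pi.div_apply]
  field_simp
  linear_combination Gamma b * hab' - Gamma (a + b) * (n : ℝ) ^ a * hb'

lemma tendsto_rpow_mul_integral_rpow_mul_one_sub_rpow_add_nat {a b : ℝ} (ha : 0 < a)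
    (hb : 0 < b) :
    Tendsto (fun n : ℕ => (n : ℝ) ^ a * ∫ x in (0 : ℝ)..1, x ^ (a - 1) * (1 - x) ^ (b + n - 1))
      atTop (𝓝 (Gamma a)) := by
  have h := (tendsto_rpow_mul_Gamma_add_nat_div_Gamma_add_nat ha hb).const_mul (Gamma a)
  rw [mul_one] at h
  refine h.congr fun n => ?_
  rw [integral_rpow_mul_one_sub_rpow ha (by positivity), ← add_assoc]
  ring

lemma abs_exp_mul_sub_one_le (β x : ℝ) (hx : x ∈ Icc (0 : ℝ) 1) :
    |exp (β * x) - 1| ≤ (|β| + |exp β - 1|) * x := by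
  have hupper : exp (β * x) ≤ (1 - x) + x * exp β := by
    simpa [smul_eq_mul, mul_comm x β] using
      convexOn_exp.2 (mem_univ 0) (mem_univ β) (sub_nonneg.2 hx.2) hx.1 (by ring)
  have hlower : β * x + 1 ≤ exp (β * x) := add_one_le_exp _
  rw [abs_le]
  constructor <;> nlinarith [mul_le_mul_of_nonneg_right (neg_abs_le β) hx.1,
    mul_le_mul_of_nonneg_right (le_abs_self (exp β - 1)) hx.1,
    mul_nonneg (abs_nonneg β) hx.1, mul_nonneg (abs_nonneg (exp β - 1)) hx.1]

lemma norm_integral_rpow_mul_one_sub_rpow_mul_sub_le {a c K : ℝ} {g : ℝ → ℝ} (ha : 0 < a)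
    (hc : 0 < c) (hgK : ∀ x ∈ Icc (0 : ℝ) 1, |g x - g 0| ≤ K * x) :
    ‖∫ x in (0 : ℝ)..1, x ^ (a - 1) * (1 - x) ^ (c - 1) * (g x - g 0)‖
      ≤ K * ∫ x in (0 : ℝ)..1, x ^ (a + 1 - 1) * (1 - x) ^ (c - 1) := by
  rw [← intervalIntegral.integral_const_mul]
  refine intervalIntegral.norm_integral_le_of_norm_le zero_le_one (ae_of_all _ fun x hx => ?_)
    ((intervalIntegrable_rpow_mul_one_sub_rpow (by linarith) hc).const_mul K)
  have hx' : x ∈ Icc (0 : ℝ) 1 := Ioc_subset_Icc_self hx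
  have hkernel : 0 ≤ x ^ (a - 1) * (1 - x) ^ (c - 1) :=
    mul_nonneg (rpow_nonneg hx'.1 _) (rpow_nonneg (sub_nonneg.2 hx'.2) _)
  calc ‖x ^ (a - 1) * (1 - x) ^ (c - 1) * (g x - g 0)‖
      = x ^ (a - 1) * (1 - x) ^ (c - 1) * |g x - g 0| := by
        rw [Real.norm_eq_abs, abs_mul, abs_of_nonneg hkernel]
    _ ≤ x ^ (a - 1) * (1 - x) ^ (c - 1) * (K * x) := by gcongr; exact hgK x hx'
    _ = K * (x ^ (a + 1 - 1) * (1 - x) ^ (c - 1)) := by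
        rw [show a + 1 - 1 = a - 1 + 1 by ring, rpow_add_one hx.1.ne']
        ring

lemma tendsto_rpow_mul_integral_rpow_mul_one_sub_rpow_add_nat_mul {a b K : ℝ} {g : ℝ → ℝ}
    (ha : 0 < a) (hb : 0 < b) (hg : ContinuousOn g (Icc 0 1))
    (hgK : ∀ x ∈ Icc (0 : ℝ) 1, |g x - g 0| ≤ K * x) :
    Tendsto (fun n : ℕ => (n : ℝ) ^ a *
        ∫ x in (0 : ℝ)..1, x ^ (a - 1) * (1 - x) ^ (b + n - 1) * g x)
      atTop (𝓝 (Gamma a * g 0)) := by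
  have herr : Tendsto (fun n : ℕ => (n : ℝ) ^ a *
      ∫ x in (0 : ℝ)..1, x ^ (a - 1) * (1 - x) ^ (b + n - 1) * (g x - g 0)) atTop (𝓝 0) := by
    have hbound := ((tendsto_rpow_mul_integral_rpow_mul_one_sub_rpow_add_nat
      (by linarith : 0 < a + 1) hb).const_mul K).mul tendsto_natCast_atTop_atTop.inv_tendsto_atTop
    rw [mul_zero] at hbound
    refine squeeze_zero_norm' ?_ hbound
    filter_upwards [eventually_ge_atTop 1] with n hn
    have hn0 : (0 : ℝ) < n := by exact_mod_cast hn
    rw [norm_mul, Real.norm_of_nonneg (rpow_nonneg hn0.le a), Pi.inv_apply,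
      rpow_add_one hn0.ne']
    refine (mul_le_mul_of_nonneg_left (norm_integral_rpow_mul_one_sub_rpow_mul_sub_le ha
      (by positivity) hgK) (rpow_nonneg hn0.le a)).trans_eq ?_
    field_simp
  have hlim := ((tendsto_rpow_mul_integral_rpow_mul_one_sub_rpow_add_nat ha hb).mul_const
    (g 0)).add herr
  rw [add_zero] at hlim
  refine hlim.congr fun n => ?_
  have hf := intervalIntegrable_rpow_mul_one_sub_rpow ha (by positivity : 0 < b + n)
  have hfg := hf.mul_continuousOn (by rwa [uIcc_of_le zero_le_one])
  have hsplit : ∫ x in (0 : ℝ)..1, x ^ (a - 1) * (1 - x) ^ (b + n - 1) * (g x - g 0)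
      = (∫ x in (0 : ℝ)..1, x ^ (a - 1) * (1 - x) ^ (b + n - 1) * g x)
        - (∫ x in (0 : ℝ)..1, x ^ (a - 1) * (1 - x) ^ (b + n - 1)) * g 0 := by
    simp_rw [mul_sub]
    rw [intervalIntegral.integral_sub hfg (hf.mul_const _), intervalIntegral.integral_mul_const]
  rw [hsplit]
  ring

lemma tendsto_choose_add_div_pow (k : ℕ) :
    Tendsto (fun n : ℕ => ((k + n).choose k : ℝ) / (n : ℝ) ^ k) atTop (𝓝 (k ! : ℝ)⁻¹) := by
  have hshift : (fun n : ℕ => ((n + k : ℕ) : ℝ)) ~[atTop] fun n => (n : ℝ) := by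
    simpa using (IsEquivalent.refl (u := fun n : ℕ => (n : ℝ))).add_const_of_norm_tendsto_atTop
      (c := (k : ℝ)) (tendsto_norm_atTop_atTop.comp tendsto_natCast_atTop_atTop)
  have hchoose := ((isEquivalent_choose k).comp_tendsto (tendsto_add_atTop_nat k)).trans
    ((hshift.pow k).div IsEquivalent.refl)
  refine ((hchoose.div (IsEquivalent.refl (u := fun n : ℕ => (n : ℝ) ^ k))).congr_left ?_
    |>.congr_right ?_).tendsto_const
  · filter_upwards with n
    simp [add_comm]
  · filter_upwards [eventually_ge_atTop 1] with n hn
    have hnk : (n : ℝ) ^ k ≠ 0 := by positivity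
    simp only [Pi.div_apply, Pi.pow_apply, Function.const_apply]
    field_simp

/-- Sampling probability asymptotics for a rare allele in a large sample with fixed
selection (eq. (8)): with
`q(n₁,n₂;β) = C(n₁+n₂,n₁)·I(n₁,n₂,β)/I(0,0,β)` where
`I(m₁,m₂,β) = ∫₀¹ x^{θ₁+m₁-1}(1-x)^{θ₂+m₂-1}e^{βx} dx`,
one has `lim_{n₂→∞} n₂^{θ₁} q(n₁,n₂;β) = Γ(θ₁+n₁)/(n₁!·I(0,0,β))`. -/
theorem sampling_prob_large_sample (θ₁ θ₂ β : ℝ) (hθ₁ : 0 < θ₁) (hθ₂ : 0 < θ₂)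
    (n₁ : ℕ) :
    Filter.Tendsto (fun n₂ : ℕ =>
        (n₂ : ℝ) ^ θ₁ * ((Nat.choose (n₁ + n₂) n₁ : ℝ) *
          (∫ x in (0:ℝ)..1,
            x ^ (θ₁ + n₁ - 1) * (1 - x) ^ (θ₂ + n₂ - 1) * Real.exp (β * x)) /
          (∫ x in (0:ℝ)..1, x ^ (θ₁ - 1) * (1 - x) ^ (θ₂ - 1) * Real.exp (β * x))))
      Filter.atTop
      (𝓝 (Real.Gamma (θ₁ + n₁) / ((Nat.factorial n₁ : ℝ) *
        ∫ x in (0:ℝ)..1, x ^ (θ₁ - 1) * (1 - x) ^ (θ₂ - 1) * Real.exp (β * x)))) := by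
  set I₀ := ∫ x in (0:ℝ)..1, x ^ (θ₁ - 1) * (1 - x) ^ (θ₂ - 1) * exp (β * x)
  have hintegral := tendsto_rpow_mul_integral_rpow_mul_one_sub_rpow_add_nat_mul
    (g := fun x => exp (β * x)) (by positivity : 0 < θ₁ + n₁) hθ₂ (by fun_prop)
    fun x hx => by simpa using abs_exp_mul_sub_one_le β x hx
  have hlim := ((tendsto_choose_add_div_pow n₁).mul hintegral).div_const I₀
  rw [mul_zero, exp_zero, mul_one, inv_mul_eq_div, div_div] at hlim
  refine hlim.congr' ?_
  filter_upwards [eventually_ge_atTop 1] with n hn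
  have hn0 : (0 : ℝ) < n := by exact_mod_cast hn
  rw [rpow_add hn0, rpow_natCast]
  generalize ∫ x in (0:ℝ)..1, x ^ (θ₁ + n₁ - 1) * (1 - x) ^ (θ₂ + n - 1) * exp (β * x) = J
  field_simp
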